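/- arXiv:1808.03134 — 5 statements merged into one kernel-verified Lean document; each statement's English description precedes it below -/
import Mathlib

section
/- Consider the 6-dimensional real Lie algebra g with basis e0,...,e5 and nonzero brackets [e2,e4]=e1, [e3,e5]=e1, [e0,e2]=e4, [e0,e3]=b·e5, [e0,e4]=-e2 (b ∈ ℝ). Then g is a Lie algebra (Jacobi identity holds), it is solvable, and for every X ∈ g all complex eigenvalues of ad_X are purely imaginary (g is of type I). -/
/-- The bracket of the 6-dimensional Lie algebra `g_{1,b}`, with basis `e0,…,e5` and
nonzero brackets `[e2,e4]=e1`, `[e3,e5]=e1`, `[e0,e2]=e4`, `[e0,e3]=b e5`, `[e0,e4]=-e2`,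
extended bilinearly and antisymmetrically. -/
def g1Bracket (b : ℝ) (X Y : Fin 6 → ℝ) : Fin 6 → ℝ :=
  ![0,
    X 2 * Y 4 - X 4 * Y 2 + X 3 * Y 5 - X 5 * Y 3,
    -(X 0 * Y 4 - X 4 * Y 0),
    0,
    X 0 * Y 2 - X 2 * Y 0,
    b * (X 0 * Y 3 - X 3 * Y 0)]

/-- The derived series of a bracket on a real vector space. -/
def derSeries {V : Type*} [AddCommGroup V] [Module ℝ V] (br : V → V → V) : ℕ → Submodule ℝ V
  | 0 => ⊤
  | n + 1 => Submodule.span ℝ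
      {z | ∃ x ∈ derSeries br n, ∃ y ∈ derSeries br n, z = br x y}

/-- The matrix of `ad_X` in the standard basis. -/
noncomputable def g1Ad (b : ℝ) (X : Fin 6 → ℝ) : Matrix (Fin 6) (Fin 6) ℝ :=
  Matrix.of fun i j => g1Bracket b X (Pi.single j 1) i

/-!
Jacobi is a coordinate identity. For solvability, every bracket has vanishing `e0`- and
`e3`-coordinates, brackets of such vectors lie in the centre `ℝ e1`, and brackets of those
vanish. For type I, `ad_X` has characteristic polynomial `λ⁴ (λ² + X₀²)`, whose roots are `0` and
`± i X₀`.
-/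

lemma derSeries_succ_le {V : Type*} [AddCommGroup V] [Module ℝ V] {br : V → V → V} {n : ℕ}
    {S T : Submodule ℝ V} (hn : derSeries br n ≤ S)
    (hS : ∀ x ∈ S, ∀ y ∈ S, br x y ∈ T) : derSeries br (n + 1) ≤ T := by
  rw [derSeries, Submodule.span_le]
  rintro _ ⟨x, hx, y, hy, rfl⟩
  exact hS x (hn hx) y (hn hy)

lemma Complex.re_eq_zero_of_sq_add_sq_eq_zero {c : ℂ} {r : ℝ} (h : c ^ 2 + (r : ℂ) ^ 2 = 0) :
    c.re = 0 := by
  have hsq : c ^ 2 = (r * I) ^ 2 := by linear_combination h - (r : ℂ) ^ 2 * I_sq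
  rcases sq_eq_sq_iff_eq_or_eq_neg.1 hsq with rfl | rfl <;> simp

section

variable (b : ℝ)

lemma g1Bracket_jacobi (X Y Z : Fin 6 → ℝ) :
    g1Bracket b (g1Bracket b X Y) Z + g1Bracket b (g1Bracket b Y Z) X
      + g1Bracket b (g1Bracket b Z X) Y = 0 := by
  funext i
  fin_cases i <;> simp [g1Bracket] <;> ring

lemma derSeries_g1Bracket_one_le :
    derSeries (g1Bracket b) 1 ≤ Submodule.pi {0, 3} fun _ => ⊥ :=
  derSeries_succ_le le_rfl fun x _ y _ => by
    simp [Submodule.mem_pi, g1Bracket]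

lemma derSeries_g1Bracket_two_le :
    derSeries (g1Bracket b) 2 ≤ Submodule.pi {0, 2, 3, 4, 5} fun _ => ⊥ :=
  derSeries_succ_le (derSeries_g1Bracket_one_le b) fun x hx y hy => by
    simp_all [Submodule.mem_pi, g1Bracket]

lemma derSeries_g1Bracket_three : derSeries (g1Bracket b) 3 = ⊥ :=
  eq_bot_iff.2 <| derSeries_succ_le (derSeries_g1Bracket_two_le b) fun x hx y hy => by
    simp only [Submodule.mem_pi, Submodule.mem_bot] at hx hy ⊢
    funext i
    fin_cases i <;> simp_all [g1Bracket]

lemma g1Ad_eq (X : Fin 6 → ℝ) :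
    g1Ad b X = !![0, 0, 0, 0, 0, 0;
                  0, 0, -X 4, -X 5, X 2, X 3;
                  X 4, 0, 0, 0, -X 0, 0;
                  0, 0, 0, 0, 0, 0;
                  -X 2, 0, X 0, 0, 0, 0;
                  -(b * X 3), 0, 0, b * X 0, 0, 0] := by
  ext i j
  fin_cases i <;> fin_cases j <;> simp [g1Ad, g1Bracket]

lemma eval_charpoly_map_g1Ad (X : Fin 6 → ℝ) (c : ℂ) :
    ((g1Ad b X).map Complex.ofReal).charpoly.eval c = c ^ 4 * (c ^ 2 + (X 0 : ℂ) ^ 2) := by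
  have hcharmatrix : Matrix.scalar (Fin 6) c - (g1Ad b X).map Complex.ofReal =
      !![c, 0, 0, 0, 0, 0;
         0, c, ↑(X 4), ↑(X 5), -↑(X 2), -↑(X 3);
         -↑(X 4), 0, c, 0, ↑(X 0), 0;
         0, 0, 0, c, 0, 0;
         ↑(X 2), 0, -↑(X 0), 0, c, 0;
         ↑b * ↑(X 3), 0, 0, -(↑b * ↑(X 0)), 0, c] := by
    rw [g1Ad_eq]
    ext i j
    fin_cases i <;> fin_cases j <;> simp
  rw [Matrix.eval_charpoly, hcharmatrix]
  simp [Matrix.det_succ_row_zero, Fin.sum_univ_succ, Fin.succAbove]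
  ring

end

/-- `g_{1,b}` is a Lie algebra (the Jacobi identity holds), it is solvable, and it is of
type I: every complex eigenvalue of every `ad_X` is purely imaginary. -/
theorem g1_lie_solvable_typeI (b : ℝ) :
    (∀ X Y Z : Fin 6 → ℝ,
      g1Bracket b (g1Bracket b X Y) Z + g1Bracket b (g1Bracket b Y Z) X
        + g1Bracket b (g1Bracket b Z X) Y = 0) ∧
    (∃ n : ℕ, derSeries (g1Bracket b) n = ⊥) ∧
    (∀ X : Fin 6 → ℝ, ∀ c : ℂ,
      c ∈ ((g1Ad b X).map Complex.ofReal).charpoly.roots → c.re = 0) := by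
  refine ⟨g1Bracket_jacobi b, ⟨3, derSeries_g1Bracket_three b⟩, fun X c hc => ?_⟩
  have hroot := (Polynomial.mem_roots (Matrix.charpoly_monic _).ne_zero).1 hc
  rw [Polynomial.IsRoot.def, eval_charpoly_map_g1Ad, mul_eq_zero] at hroot
  rcases hroot with hc0 | hcX
  · simp [pow_eq_zero_iff four_ne_zero |>.1 hc0]
  · exact Complex.re_eq_zero_of_sq_add_sq_eq_zero hcX
end

section
/- Consider the 6-dimensional real Lie algebra g_{1,b} with basis e0,...,e5, nonzero brackets [e2,e4]=e1, [e3,e5]=e1, [e0,e2]=e4, [e0,e3]=b e5, [e0,e4]=-e2, and dual basis e^0,...,e^5. Then θ = e^0 and ω = -e^{01} - e^{24} - e^{35} satisfy: ω is nondegenerate, dθ = 0, and dω = θ ∧ ω, where d is the Chevalley–Eilenberg differential. -/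
/-- The 1-form `θ = e^0` on `g_{1,b}`. -/
def g1θ (X : Fin 6 → ℝ) : ℝ := X 0

/-- The 2-form `ω = -e^{01} - e^{24} - e^{35}` on `g_{1,b}`. -/
def g1ω (X Y : Fin 6 → ℝ) : ℝ :=
  -(X 0 * Y 1 - X 1 * Y 0) - (X 2 * Y 4 - X 4 * Y 2) - (X 3 * Y 5 - X 5 * Y 3)

def g1J (X : Fin 6 → ℝ) : Fin 6 → ℝ :=
  ![X 1, -X 0, X 4, X 5, -X 2, -X 3]

lemma g1ω_g1J (X : Fin 6 → ℝ) : g1ω X (g1J X) = X ⬝ᵥ X := by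
  simp only [g1ω, g1J, dotProduct, Fin.sum_univ_six, Matrix.cons_val]
  ring

lemma g1ω_nondegenerate (X : Fin 6 → ℝ) (h : ∀ Y, g1ω X Y = 0) : X = 0 :=
  dotProduct_self_eq_zero.mp (g1ω_g1J X ▸ h (g1J X))

lemma g1θ_g1Bracket (b : ℝ) (X Y : Fin 6 → ℝ) : g1θ (g1Bracket b X Y) = 0 := rfl

lemma g1_dω_eq_θ_wedge_ω (b : ℝ) (X Y Z : Fin 6 → ℝ) :
    -g1ω (g1Bracket b X Y) Z + g1ω (g1Bracket b X Z) Y - g1ω (g1Bracket b Y Z) X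
      = g1θ X * g1ω Y Z - g1θ Y * g1ω X Z + g1θ Z * g1ω X Y := by
  simp only [g1ω, g1θ, g1Bracket, Matrix.cons_val]
  ring

/-- On `g_{1,b}`, the pair `(ω = -e^{01} - e^{24} - e^{35}, θ = e^0)` is an LCS structure:
`ω` is nondegenerate, `dθ = 0`, and `dω = θ ∧ ω` (Chevalley–Eilenberg differential). -/
theorem g1_lcs (b : ℝ) :
    (∀ X : Fin 6 → ℝ, (∀ Y : Fin 6 → ℝ, g1ω X Y = 0) → X = 0) ∧
    (∀ X Y : Fin 6 → ℝ, -g1θ (g1Bracket b X Y) = 0) ∧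
    (∀ X Y Z : Fin 6 → ℝ,
      -g1ω (g1Bracket b X Y) Z + g1ω (g1Bracket b X Z) Y - g1ω (g1Bracket b Y Z) X
        = g1θ X * g1ω Y Z - g1θ Y * g1ω X Z + g1θ Z * g1ω X Y) :=
  ⟨g1ω_nondegenerate, fun X Y => by rw [g1θ_g1Bracket, neg_zero], g1_dω_eq_θ_wedge_ω b⟩
end

section
/- Let (g, ω, θ) be a Lie algebra with an LCS structure of the first kind, i.e. there exists X ∈ g with L_X ω = 0 and θ(X) ≠ 0. Then ω is d_θ-exact: ω = dη - θ ∧ η where η = -i_U ω and U = X/θ(X) (so [ω] = 0 in the Morse–Novikov cohomology H²_θ(g)). -/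
/-!
Contract `dω = θ ∧ ω` with `X`. Since `L_X ω = 0`, the two terms of `dω(X, y, z)` involving
`ad X` cancel, which leaves `θ(X) ω = d(i_X ω) - θ ∧ i_X ω` up to sign; dividing by `θ(X)`
exhibits `ω` as `d_θ η` with `η = -i_U ω`.
-/

section InfinitesimalAutomorphism

variable {R g : Type*} [CommRing R] [LieRing g] [Module R g]
  (ω : g →ₗ[R] g →ₗ[R] R) (θ : g →ₗ[R] R) {X : g}

theorem apply_lie_left_comm_of_lie_invariant (hskew : ∀ x y : g, ω x y = -ω y x)
    (hX : ∀ y z : g, ω ⁅X, y⁆ z + ω y ⁅X, z⁆ = 0) (y z : g) :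
    ω ⁅X, y⁆ z = ω ⁅X, z⁆ y := by
  linear_combination hX y z - hskew y ⁅X, z⁆

theorem mul_apply_eq_apply_lie_add_of_lie_invariant (hskew : ∀ x y : g, ω x y = -ω y x)
    (hlcs : ∀ x y z : g,
      -ω ⁅x, y⁆ z + ω ⁅x, z⁆ y - ω ⁅y, z⁆ x
        = θ x * ω y z - θ y * ω x z + θ z * ω x y)
    (hX : ∀ y z : g, ω ⁅X, y⁆ z + ω y ⁅X, z⁆ = 0) (y z : g) :
    θ X * ω y z = ω X ⁅y, z⁆ + θ y * ω X z - θ z * ω X y := by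
  linear_combination -hlcs X y z - apply_lie_left_comm_of_lie_invariant ω hskew hX y z
    - hskew ⁅y, z⁆ X

end InfinitesimalAutomorphism

theorem firstKind_exact_general (g : Type*) [LieRing g] [LieAlgebra ℝ g]
    (ω : g →ₗ[ℝ] g →ₗ[ℝ] ℝ) (θ : g →ₗ[ℝ] ℝ)
    (hskew : ∀ x y : g, ω x y = -ω y x)
    (hlcs : ∀ x y z : g,
      -ω ⁅x, y⁆ z + ω ⁅x, z⁆ y - ω ⁅y, z⁆ x
        = θ x * ω y z - θ y * ω x z + θ z * ω x y)
    (X : g) (hX : ∀ y z : g, ω ⁅X, y⁆ z + ω y ⁅X, z⁆ = 0) (hθX : θ X ≠ 0) :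
    ∀ y z : g,
      ω y z = -(-ω ((θ X)⁻¹ • X) ⁅y, z⁆)
        - (θ y * (-ω ((θ X)⁻¹ • X) z) - θ z * (-ω ((θ X)⁻¹ • X) y)) := by
  intro y z
  have key := mul_apply_eq_apply_lie_add_of_lie_invariant ω θ hskew hlcs hX y z
  simp only [map_smul, LinearMap.smul_apply, smul_eq_mul]
  field_simp
  linear_combination key

/-- If an LCS structure `(ω, θ)` on a Lie algebra `g` is of the first kind (there is an
infinitesimal automorphism `X` with `θ(X) ≠ 0`), then `ω` is `d_θ`-exact:
`ω = dη - θ ∧ η` where `η = -i_U ω` and `U = X / θ(X)`. -/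
theorem firstKind_exact (g : Type*) [LieRing g] [LieAlgebra ℝ g] [FiniteDimensional ℝ g]
    (ω : g →ₗ[ℝ] g →ₗ[ℝ] ℝ) (θ : g →ₗ[ℝ] ℝ)
    (hskew : ∀ x y : g, ω x y = -ω y x)
    (hnondeg : ∀ x : g, (∀ y : g, ω x y = 0) → x = 0)
    (hclosed : ∀ x y : g, θ ⁅x, y⁆ = 0)
    (hlcs : ∀ x y z : g,
      -ω ⁅x, y⁆ z + ω ⁅x, z⁆ y - ω ⁅y, z⁆ x
        = θ x * ω y z - θ y * ω x z + θ z * ω x y)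
    (X : g) (hX : ∀ y z : g, ω ⁅X, y⁆ z + ω y ⁅X, z⁆ = 0) (hθX : θ X ≠ 0) :
    ∀ y z : g,
      ω y z = -(-ω ((θ X)⁻¹ • X) ⁅y, z⁆)
        - (θ y * (-ω ((θ X)⁻¹ • X) z) - θ z * (-ω ((θ X)⁻¹ • X) y)) :=
  firstKind_exact_general g ω θ hskew hlcs X hX hθX
end

section
/- Let (s, β) be a finite-dimensional symplectic Lie algebra and E a derivation of s with β(EX,Y) + β(X,EY) = 0 for all X, Y. Define g = ℝU ⊕ ℝV ⊕ s with bracket [X,Y]_g = β(X,Y)V + [X,Y]_s, [U,X]_g = EX for X,Y ∈ s, and [U,V]=0, V central. Then g is a Lie algebra (the bracket satisfies the Jacobi identity). -/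
/-!
The double extension is the central extension, by the 2-cocycle `((X, a), (Y, b)) ↦ β(X, Y)`,
of the semidirect product `s ⋊ ℝU` in which `U` acts by the derivation `E`. That this lifted form
is a 2-cocycle is exactly the closedness of `β` together with the `β`-skewness of `E`; the central
extension of a Lie algebra by a 2-cocycle is again a Lie algebra, and the bracket of the double
extension is its bracket written in the coordinates `(u, v, X)`.
-/

/-- The bracket of the double extension `g = ℝU ⊕ ℝV ⊕ s` of a symplectic Lie algebra
`(s, β)` by a symplectic derivation `E`: `[X,Y] = β(X,Y)V + [X,Y]_s`, `[U,X] = EX`,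
`[U,V] = 0`, `V` central.  Here an element of `g` is a triple `(u, v, X)`. -/
def dblBracket {s : Type*} [LieRing s] [LieAlgebra ℝ s]
    (β : s →ₗ[ℝ] s →ₗ[ℝ] ℝ) (E : s →ₗ[ℝ] s) (p q : ℝ × ℝ × s) : ℝ × ℝ × s :=
  (0, β p.2.2 q.2.2, p.1 • E q.2.2 - q.1 • E p.2.2 + ⁅p.2.2, q.2.2⁆)

open LieAlgebra LieModule.Cohomology

-- `R` with its (zero) commutator bracket plays the role of the line `ℝU`.
attribute [local instance] LieRing.ofAssociativeRing

namespace LieDerivation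

variable {R L : Type*} [CommRing R] [LieRing L] [LieAlgebra R L]

def ofLeibniz (E : L →ₗ[R] L) (hE : ∀ X Y, E ⁅X, Y⁆ = ⁅E X, Y⁆ + ⁅X, E Y⁆) :
    LieDerivation R L L where
  toLinearMap := E
  leibniz' X Y := by rw [hE, ← lie_skew Y (E X)]; abel

def lineHom (D : LieDerivation R L L) : R →ₗ⁅R⁆ LieDerivation R L L where
  toLinearMap := LinearMap.toSpanSingleton R _ D
  map_lie' := by simp [Ring.lie_def, mul_comm]

@[simp]
lemma lineHom_apply (D : LieDerivation R L L) (t : R) : lineHom D t = t • D := rfl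

end LieDerivation

theorem lie_lie_add_lie_lie_add_lie_lie {L : Type*} [LieRing L] (x y z : L) :
    ⁅⁅x, y⁆, z⁆ + ⁅⁅y, z⁆, x⁆ + ⁅⁅z, x⁆, y⁆ = 0 := by
  rw [← lie_skew ⁅x, y⁆ z, ← lie_skew ⁅y, z⁆ x, ← lie_skew ⁅z, x⁆ y, ← neg_eq_zero,
    ← lie_jacobi x y z]
  abel

namespace LieAlgebra.DoubleExtension

section CommRing

variable {R s : Type*} [CommRing R] [LieRing s] [LieAlgebra R s] {D : LieDerivation R s s}

def cocycle {β : s →ₗ[R] s →ₗ[R] R} (hβ : β.IsAlt)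
    (hdβ : ∀ X Y Z, β X ⁅Y, Z⁆ = β ⁅X, Y⁆ Z + β Y ⁅X, Z⁆) (hDβ : β.IsSkewAdjoint D) :
    twoCocycle R (s ⋊⁅D.lineHom⁆ R) (TrivialLieModule R (s ⋊⁅D.lineHom⁆ R) R) :=
  ⟨⟨β.compl₁₂ (SemiDirectSum.projl _) (SemiDirectSum.projl _), fun x => hβ x.left⟩, by
    rw [mem_twoCocycle_iff_of_trivial]
    rintro ⟨X, a⟩ ⟨Y, b⟩ ⟨Z, c⟩
    have hD (X Y : s) : β (D X) Y = -β X (D Y) := by rw [hDβ X Y, Pi.neg_apply, map_neg]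
    simp only [SemiDirectSum.lie_eq_mk, LieDerivation.lineHom_apply, LieDerivation.coe_smul,
      Pi.smul_apply]
    show β X (⁅Y, Z⁆ + b • D Z - c • D Y) =
      β (⁅X, Y⁆ + a • D Y - b • D X) Z + β Y (⁅X, Z⁆ + a • D Z - c • D X)
    simp only [map_add, map_sub, map_smul, LinearMap.add_apply, LinearMap.sub_apply,
      LinearMap.smul_apply, smul_eq_mul, hD, ← hβ.neg (D X) Y]
    linear_combination hdβ X Y Z⟩

variable (c : twoCocycle R (s ⋊⁅D.lineHom⁆ R) (TrivialLieModule R (s ⋊⁅D.lineHom⁆ R) R))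

def ofTriple : R × R × s →ₗ[R] ofTwoCocycle c where
  toFun p := ofProd c (⟨p.2.2, p.1⟩, p.2.1)
  map_add' _ _ := rfl
  map_smul' _ _ := rfl

lemma ofTriple_injective : Function.Injective (ofTriple c) := by
  rintro ⟨u, v, X⟩ ⟨u', v', X'⟩ h
  obtain ⟨⟩ := (ofProd c).injective h
  rfl

end CommRing

lemma ofTriple_dblBracket {s : Type*} [LieRing s] [LieAlgebra ℝ s] {β : s →ₗ[ℝ] s →ₗ[ℝ] ℝ}
    {E : s →ₗ[ℝ] s} (hE : ∀ X Y, E ⁅X, Y⁆ = ⁅E X, Y⁆ + ⁅X, E Y⁆) (hβ : β.IsAlt)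
    (hdβ : ∀ X Y Z, β X ⁅Y, Z⁆ = β ⁅X, Y⁆ Z + β Y ⁅X, Z⁆)
    (hDβ : β.IsSkewAdjoint (LieDerivation.ofLeibniz E hE)) (p q : ℝ × ℝ × s) :
    ofTriple (cocycle hβ hdβ hDβ) (dblBracket β E p q) =
      ⁅ofTriple (cocycle hβ hdβ hDβ) p, ofTriple (cocycle hβ hdβ hDβ) q⁆ := by
  rw [bracket_ofTwoCocycle]
  refine congrArg (ofProd _) (Prod.ext (SemiDirectSum.ext ?_ ?_) ?_)
  · change _ = _ + p.1 • E q.2.2 - q.1 • E p.2.2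
    simp only [dblBracket]
    abel
  · simp [dblBracket, Ring.lie_def, mul_comm]
  · change β p.2.2 q.2.2 = β p.2.2 q.2.2 + 0 - 0
    ring

end LieAlgebra.DoubleExtension

open LieAlgebra.DoubleExtension in
theorem double_extension_jacobi_general (s : Type*) [LieRing s] [LieAlgebra ℝ s]
    (β : s →ₗ[ℝ] s →ₗ[ℝ] ℝ) (E : s →ₗ[ℝ] s)
    (hskew : ∀ X Y : s, β X Y = -β Y X)
    (hclosedβ : ∀ X Y Z : s, -β ⁅X, Y⁆ Z + β ⁅X, Z⁆ Y - β ⁅Y, Z⁆ X = 0)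
    (hder : ∀ X Y : s, E ⁅X, Y⁆ = ⁅E X, Y⁆ + ⁅X, E Y⁆)
    (hEskew : ∀ X Y : s, β (E X) Y + β X (E Y) = 0) :
    ∀ p q r : ℝ × ℝ × s,
      dblBracket β E (dblBracket β E p q) r + dblBracket β E (dblBracket β E q r) p
        + dblBracket β E (dblBracket β E r p) q = 0 := by
  have hβ : β.IsAlt := fun X => by linarith [hskew X X]
  have hdβ (X Y Z : s) : β X ⁅Y, Z⁆ = β ⁅X, Y⁆ Z + β Y ⁅X, Z⁆ := by
    linear_combination hclosedβ X Y Z + hskew X ⁅Y, Z⁆ - hskew Y ⁅X, Z⁆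
  have hDβ : β.IsSkewAdjoint (LieDerivation.ofLeibniz E hder) := fun X Y => by
    show β (E X) Y = β X (-E Y)
    rw [map_neg]
    linear_combination hEskew X Y
  intro p q r
  apply ofTriple_injective (cocycle hβ hdβ hDβ)
  simp only [map_add, map_zero, ofTriple_dblBracket]
  exact lie_lie_add_lie_lie_add_lie_lie _ _ _

/-- The double extension of a symplectic Lie algebra `(s, β)` by a derivation `E` with
`β(EX,Y) + β(X,EY) = 0` is a Lie algebra: its bracket satisfies the Jacobi identity. -/
theorem double_extension_jacobi (s : Type*) [LieRing s] [LieAlgebra ℝ s]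
    [FiniteDimensional ℝ s]
    (β : s →ₗ[ℝ] s →ₗ[ℝ] ℝ) (E : s →ₗ[ℝ] s)
    (hskew : ∀ X Y : s, β X Y = -β Y X)
    (hnondeg : ∀ X : s, (∀ Y : s, β X Y = 0) → X = 0)
    (hclosedβ : ∀ X Y Z : s, -β ⁅X, Y⁆ Z + β ⁅X, Z⁆ Y - β ⁅Y, Z⁆ X = 0)
    (hder : ∀ X Y : s, E ⁅X, Y⁆ = ⁅E X, Y⁆ + ⁅X, E Y⁆)
    (hEskew : ∀ X Y : s, β (E X) Y + β X (E Y) = 0) :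
    ∀ p q r : ℝ × ℝ × s,
      dblBracket β E (dblBracket β E p q) r + dblBracket β E (dblBracket β E q r) p
        + dblBracket β E (dblBracket β E r p) q = 0 :=
  double_extension_jacobi_general s β E hskew hclosedβ hder hEskew
end

section
/- With g the double extension of a symplectic Lie algebra (s, β) by a symplectic derivation E as above, define θ, η ∈ g* by θ(U)=1, θ(V)=0, η(V)=1, η(U)=0, θ|_s = η|_s = 0. Then ω = dη - θ ∧ η is a nondegenerate 2-form on g, θ is closed, and dω = θ ∧ ω; moreover the Lee vector of (ω,θ) is V, which is central in g. -/
/-- `θ(U) = 1`, `θ(V) = 0`, `θ|_s = 0`. -/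
def dblθ {s : Type*} (p : ℝ × ℝ × s) : ℝ := p.1

/-- `η(V) = 1`, `η(U) = 0`, `η|_s = 0`. -/
def dblη {s : Type*} (p : ℝ × ℝ × s) : ℝ := p.2.1

/-- The 2-form `ω = dη - θ ∧ η` on the double extension. -/
def dblω {s : Type*} [LieRing s] [LieAlgebra ℝ s]
    (β : s →ₗ[ℝ] s →ₗ[ℝ] ℝ) (E : s →ₗ[ℝ] s) (p q : ℝ × ℝ × s) : ℝ :=
  -dblη (dblBracket β E p q) - (dblθ p * dblη q - dblθ q * dblη p)

/-!
Writing `p = (a, b, X)`, the form is `ω(p, q) = -β(X, Y) - (a d - c b)`, i.e. `-β` on `s` plus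
the hyperbolic pairing `U ∧ V`, so it is nondegenerate exactly because `β` is, and `i_V ω = θ`
can be read off. Since `θ` vanishes on every bracket, `dθ = 0`. In `dω(p, q, r)` the `θ ∧ η`
part of `ω` reproduces `θ ∧ ω` on the right, the `E`-terms cancel because `E` is skew for
`β`, and what remains is `dβ = 0`.
-/

section DoubleExtension

variable {s : Type*} [LieRing s] [LieAlgebra ℝ s] (β : s →ₗ[ℝ] s →ₗ[ℝ] ℝ) (E : s →ₗ[ℝ] s)

@[simp]
theorem dblω_mk (a b c d : ℝ) (X Y : s) :
    dblω β E (a, b, X) (c, d, Y) = -β X Y - (a * d - c * b) :=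
  rfl

theorem dblω_nondegenerate (hnondeg : ∀ X : s, (∀ Y : s, β X Y = 0) → X = 0)
    (p : ℝ × ℝ × s) (hp : ∀ q, dblω β E p q = 0) : p = 0 := by
  obtain ⟨a, b, X⟩ := p
  have hb : b = 0 := by simpa using hp (1, 0, 0)
  have ha : a = 0 := by simpa using hp (0, 1, 0)
  have hX : X = 0 := hnondeg X fun Y => by simpa [ha, hb] using hp (0, 0, Y)
  simp [ha, hb, hX]

theorem dblθ_dblBracket (p q : ℝ × ℝ × s) : dblθ (dblBracket β E p q) = 0 :=
  rfl

theorem dblω_coboundary_eq_dblθ_wedge (hskew : ∀ X Y : s, β X Y = -β Y X)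
    (hclosedβ : ∀ X Y Z : s, -β ⁅X, Y⁆ Z + β ⁅X, Z⁆ Y - β ⁅Y, Z⁆ X = 0)
    (hEskew : ∀ X Y : s, β (E X) Y + β X (E Y) = 0) (p q r : ℝ × ℝ × s) :
    -dblω β E (dblBracket β E p q) r + dblω β E (dblBracket β E p r) q
        - dblω β E (dblBracket β E q r) p
      = dblθ p * dblω β E q r - dblθ q * dblω β E p r + dblθ r * dblω β E p q := by
  obtain ⟨a, b, X⟩ := p
  obtain ⟨c, d, Y⟩ := q
  obtain ⟨e, f, Z⟩ := r
  simp only [dblBracket, dblω_mk, dblθ, map_add, map_sub, map_smul, LinearMap.add_apply,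
    LinearMap.sub_apply, LinearMap.smul_apply, smul_eq_mul]
  linear_combination a * (hEskew Y Z) - a * (hskew (E Z) Y)
    - c * (hEskew X Z) + c * (hskew (E Z) X)
    + e * (hEskew X Y) - e * (hskew (E Y) X)
    - hclosedβ X Y Z

theorem dblω_lee_vector (q : ℝ × ℝ × s) : dblω β E (0, 1, 0) q = dblθ q := by
  obtain ⟨c, d, Y⟩ := q
  simp [dblθ]

theorem dblBracket_lee_vector_left (q : ℝ × ℝ × s) : dblBracket β E (0, 1, 0) q = 0 := by
  simp [dblBracket]

end DoubleExtension

theorem double_extension_lcs_general (s : Type*) [LieRing s] [LieAlgebra ℝ s]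
    (β : s →ₗ[ℝ] s →ₗ[ℝ] ℝ) (E : s →ₗ[ℝ] s)
    (hskew : ∀ X Y : s, β X Y = -β Y X)
    (hnondeg : ∀ X : s, (∀ Y : s, β X Y = 0) → X = 0)
    (hclosedβ : ∀ X Y Z : s, -β ⁅X, Y⁆ Z + β ⁅X, Z⁆ Y - β ⁅Y, Z⁆ X = 0)
    (hEskew : ∀ X Y : s, β (E X) Y + β X (E Y) = 0) :
    (∀ p : ℝ × ℝ × s, (∀ q : ℝ × ℝ × s, dblω β E p q = 0) → p = 0) ∧
    (∀ p q : ℝ × ℝ × s, dblθ (dblBracket β E p q) = 0) ∧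
    (∀ p q r : ℝ × ℝ × s,
      -dblω β E (dblBracket β E p q) r + dblω β E (dblBracket β E p r) q
          - dblω β E (dblBracket β E q r) p
        = dblθ p * dblω β E q r - dblθ q * dblω β E p r + dblθ r * dblω β E p q) ∧
    (∀ q : ℝ × ℝ × s, dblω β E ((0 : ℝ), (1 : ℝ), (0 : s)) q = dblθ q) ∧
    (∀ q : ℝ × ℝ × s, dblBracket β E ((0 : ℝ), (1 : ℝ), (0 : s)) q = 0) :=
  ⟨dblω_nondegenerate β E hnondeg, dblθ_dblBracket β E,
    dblω_coboundary_eq_dblθ_wedge β E hskew hclosedβ hEskew,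
    dblω_lee_vector β E, dblBracket_lee_vector_left β E⟩

/-- On the double extension `g` of `(s, β)` by a symplectic derivation `E`, the form
`ω = dη - θ ∧ η` is nondegenerate, `θ` is closed, `dω = θ ∧ ω`, and the Lee vector
(`i_V ω = θ`) is `V = (0,1,0)`, which is central in `g`. -/
theorem double_extension_lcs (s : Type*) [LieRing s] [LieAlgebra ℝ s]
    [FiniteDimensional ℝ s]
    (β : s →ₗ[ℝ] s →ₗ[ℝ] ℝ) (E : s →ₗ[ℝ] s)
    (hskew : ∀ X Y : s, β X Y = -β Y X)
    (hnondeg : ∀ X : s, (∀ Y : s, β X Y = 0) → X = 0)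
    (hclosedβ : ∀ X Y Z : s, -β ⁅X, Y⁆ Z + β ⁅X, Z⁆ Y - β ⁅Y, Z⁆ X = 0)
    (hder : ∀ X Y : s, E ⁅X, Y⁆ = ⁅E X, Y⁆ + ⁅X, E Y⁆)
    (hEskew : ∀ X Y : s, β (E X) Y + β X (E Y) = 0) :
    (∀ p : ℝ × ℝ × s, (∀ q : ℝ × ℝ × s, dblω β E p q = 0) → p = 0) ∧
    (∀ p q : ℝ × ℝ × s, dblθ (dblBracket β E p q) = 0) ∧
    (∀ p q r : ℝ × ℝ × s,
      -dblω β E (dblBracket β E p q) r + dblω β E (dblBracket β E p r) q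
          - dblω β E (dblBracket β E q r) p
        = dblθ p * dblω β E q r - dblθ q * dblω β E p r + dblθ r * dblω β E p q) ∧
    (∀ q : ℝ × ℝ × s, dblω β E ((0 : ℝ), (1 : ℝ), (0 : s)) q = dblθ q) ∧
    (∀ q : ℝ × ℝ × s, dblBracket β E ((0 : ℝ), (1 : ℝ), (0 : s)) q = 0) :=
  double_extension_lcs_general s β E hskew hnondeg hclosedβ hEskew
end
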